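/- Let G be a graph. There is a bijection between homogeneous pairs (U, W_1, W_2) of G with both W_1 and W_2 non-empty, and M_hp-partitions σ of G satisfying: at least 2 vertices are mapped to parts 3–6, parts 1 and 2 are each non-empty, and at least one of parts 1 and 2 contains at least 2 vertices. -/

import Mathlib

inductive Entry | zero | one | star
deriving DecidableEq

/-- The 6×6 matrix `M_hp` for homogeneous pairs (rows/columns indexed 1..6). -/
def Mhp : Fin 6 → Fin 6 → Entry :=
  ![![.star, .star, .one,  .zero, .one,  .zero],
    ![.star, .star, .one,  .one,  .zero, .zero],
    ![.one,  .one,  .star, .star, .star, .star],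
    ![.zero, .one,  .star, .star, .star, .star],
    ![.one,  .zero, .star, .star, .star, .star],
    ![.zero, .zero, .star, .star, .star, .star]]

/-- `σ` is an `M`-partition of `G`. -/
def IsMPartition {V : Type*} (G : SimpleGraph V) {D : Type*} (M : D → D → Entry)
    (σ : V → D) : Prop :=
  ∀ u v : V, u ≠ v →
    (G.Adj u v → M (σ u) (σ v) ≠ Entry.zero) ∧
    (¬ G.Adj u v → M (σ u) (σ v) ≠ Entry.one)

/-! A homogeneous pair `(U, W₁, W₂)` is sent to the colouring that puts `W₁`, `W₂` in parts 1, 2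
and a vertex of `U` in the part among 3–6 recording whether it is complete to `W₁` and to `W₂`.
Rows 3–6 of `M_hp` restricted to columns 1, 2 are the four distinct `0/1` patterns, so in an
`M_hp`-partition with parts 1 and 2 nonempty every vertex of parts 3–6 is complete or anticomplete
to each of them, and its part is read back from that pattern. Parts 1–6 are `0, …, 5 : Fin 6`. -/

theorem Set.eq_compl_union_iff {α : Type*} {U W₁ W₂ : Set α} :
    U = (W₁ ∪ W₂)ᶜ ↔ U ∪ W₁ ∪ W₂ = Set.univ ∧ Disjoint U W₁ ∧ Disjoint U W₂ := by
  rw [eq_compl_iff_isCompl, isCompl_iff, Set.disjoint_union_right, codisjoint_iff,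
    Set.union_assoc]
  exact ⟨fun ⟨hd, hc⟩ => ⟨hc, hd⟩, fun ⟨hc, hd⟩ => ⟨hd, hc⟩⟩

theorem Mhp_symm : ∀ i j : Fin 6, Mhp i j = Mhp j i := by decide

theorem Mhp_eq_star : ∀ i j : Fin 6, (2 ≤ i.val ↔ 2 ≤ j.val) → Mhp i j = .star := by decide

theorem Mhp_ne_star : ∀ i j : Fin 6, 2 ≤ i.val → j.val < 2 → Mhp i j ≠ .star := by decide

section MPartition

variable {V : Type} (G : SimpleGraph V)

theorem setOf_two_le_eq_compl (σ : V → Fin 6) :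
    {v | 2 ≤ (σ v).val} = ({v | σ v = 0} ∪ {v | σ v = 1})ᶜ := by
  ext v
  simp only [Set.mem_ofPred_eq, Set.mem_compl_iff, Set.mem_union, Fin.ext_iff]
  omega

theorem isMPartition_Mhp_iff {σ : V → Fin 6} :
    IsMPartition G Mhp σ ↔
      ∀ u v, 2 ≤ (σ u).val → (σ v).val < 2 → (G.Adj u v ↔ Mhp (σ u) (σ v) = .one) := by
  constructor
  · intro hσ u v hu hv
    have huv : u ≠ v := by rintro rfl; omega
    have hstar := Mhp_ne_star _ _ hu hv
    constructor
    · intro hadj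
      have := (hσ u v huv).1 hadj
      cases h : Mhp (σ u) (σ v) <;> simp_all
    · intro hone
      by_contra hadj
      exact (hσ u v huv).2 hadj hone
  · intro h u v _
    by_cases hu : 2 ≤ (σ u).val <;> by_cases hv : 2 ≤ (σ v).val
    · simp [Mhp_eq_star _ _ (iff_of_true hu hv)]
    · have := h u v hu (by omega)
      cases e : Mhp (σ u) (σ v) <;> simp_all
    · have := h v u hv (by omega)
      rw [Mhp_symm] at this
      cases e : Mhp (σ v) (σ u) <;> simp_all [G.adj_comm]
    · simp [Mhp_eq_star _ _ (iff_of_false hu hv)]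

theorem adj_iff_of_isMPartition {σ : V → Fin 6} (hσ : IsMPartition G Mhp σ) {u w : V}
    {j : Fin 6} (hu : 2 ≤ (σ u).val) (hw : σ w = j) (hj : j.val < 2) :
    G.Adj u w ↔ Mhp (σ u) j = .one := by
  subst hw
  exact (isMPartition_Mhp_iff G).1 hσ u w hu hj

theorem forall_adj_iff_of_isMPartition {σ : V → Fin 6} (hσ : IsMPartition G Mhp σ) {u : V}
    (hu : 2 ≤ (σ u).val) {j : Fin 6} (hj : j.val < 2) (hne : {v | σ v = j}.Nonempty) :
    (∀ w ∈ {v | σ v = j}, G.Adj u w) ↔ Mhp (σ u) j = .one := by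
  obtain ⟨w, hw⟩ := hne
  exact ⟨fun h => (adj_iff_of_isMPartition G hσ hu hw hj).1 (h w hw),
    fun h v hv => (adj_iff_of_isMPartition G hσ hu hv hj).2 h⟩

theorem homogeneous_of_isMPartition {σ : V → Fin 6} (hσ : IsMPartition G Mhp σ) {j : Fin 6}
    (hj : j.val < 2) :
    ∀ u ∈ {v | 2 ≤ (σ v).val},
      (∀ w ∈ {v | σ v = j}, G.Adj u w) ∨ (∀ w ∈ {v | σ v = j}, ¬ G.Adj u w) := by
  intro u hu
  by_cases h : Mhp (σ u) j = .one
  · exact Or.inl fun w hw => (adj_iff_of_isMPartition G hσ hu hw hj).2 h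
  · exact Or.inr fun w hw hadj => h ((adj_iff_of_isMPartition G hσ hu hw hj).1 hadj)

end MPartition

open Classical in
/-- The part among 3–6 of a vertex whose adjacency to `W₁` and to `W₂` is complete as `a`
and `b` say. -/
noncomputable def uPart (a b : Prop) : Fin 6 :=
  if a then (if b then 2 else 4) else (if b then 3 else 5)

theorem two_le_uPart (a b : Prop) : 2 ≤ (uPart a b).val := by
  unfold uPart; split_ifs <;> decide

theorem Mhp_uPart_zero (a b : Prop) : Mhp (uPart a b) 0 = .one ↔ a := by
  unfold uPart; by_cases a <;> by_cases b <;> simp_all [Mhp]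

theorem Mhp_uPart_one (a b : Prop) : Mhp (uPart a b) 1 = .one ↔ b := by
  unfold uPart; by_cases a <;> by_cases b <;> simp_all [Mhp]

theorem uPart_Mhp {i : Fin 6} (hi : 2 ≤ i.val) :
    uPart (Mhp i 0 = .one) (Mhp i 1 = .one) = i := by
  fin_cases i <;> simp_all [uPart, Mhp]

section pairColouring

variable {V : Type} (G : SimpleGraph V) (W₁ W₂ : Set V)

open Classical in
noncomputable def pairColouring (v : V) : Fin 6 :=
  if v ∈ W₁ then 0 else if v ∈ W₂ then 1 else uPart (∀ w ∈ W₁, G.Adj v w) (∀ w ∈ W₂, G.Adj v w)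

theorem pairColouring_of_not_mem {v : V} (h₁ : v ∉ W₁) (h₂ : v ∉ W₂) :
    pairColouring G W₁ W₂ v = uPart (∀ w ∈ W₁, G.Adj v w) (∀ w ∈ W₂, G.Adj v w) := by
  simp [pairColouring, h₁, h₂]

theorem setOf_pairColouring_eq_zero : {v | pairColouring G W₁ W₂ v = 0} = W₁ := by
  ext v
  by_cases h₁ : v ∈ W₁
  · simp [pairColouring, h₁]
  by_cases h₂ : v ∈ W₂
  · simp [pairColouring, h₁, h₂]
  · have := two_le_uPart (∀ w ∈ W₁, G.Adj v w) (∀ w ∈ W₂, G.Adj v w)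
    simp only [Set.mem_ofPred_eq, pairColouring_of_not_mem G W₁ W₂ h₁ h₂, h₁, iff_false]
    omega

theorem setOf_pairColouring_eq_one (hW : Disjoint W₁ W₂) :
    {v | pairColouring G W₁ W₂ v = 1} = W₂ := by
  ext v
  by_cases h₁ : v ∈ W₁
  · simp [pairColouring, h₁, Set.disjoint_left.1 hW h₁]
  by_cases h₂ : v ∈ W₂
  · simp [pairColouring, h₁, h₂]
  · have := two_le_uPart (∀ w ∈ W₁, G.Adj v w) (∀ w ∈ W₂, G.Adj v w)
    simp only [Set.mem_ofPred_eq, pairColouring_of_not_mem G W₁ W₂ h₁ h₂, h₂, iff_false]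
    omega

theorem setOf_two_le_pairColouring :
    {v | 2 ≤ (pairColouring G W₁ W₂ v).val} = (W₁ ∪ W₂)ᶜ := by
  ext v
  by_cases h₁ : v ∈ W₁
  · simp [pairColouring, h₁]
  by_cases h₂ : v ∈ W₂
  · simp [pairColouring, h₁, h₂]
  · simp [pairColouring_of_not_mem G W₁ W₂ h₁ h₂, two_le_uPart, h₁, h₂]

theorem isMPartition_pairColouring (hW : Disjoint W₁ W₂)
    (hom₁ : ∀ v ∈ (W₁ ∪ W₂)ᶜ, (∀ w ∈ W₁, G.Adj v w) ∨ (∀ w ∈ W₁, ¬ G.Adj v w))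
    (hom₂ : ∀ v ∈ (W₁ ∪ W₂)ᶜ, (∀ w ∈ W₂, G.Adj v w) ∨ (∀ w ∈ W₂, ¬ G.Adj v w)) :
    IsMPartition G Mhp (pairColouring G W₁ W₂) := by
  have adj_iff {W : Set V} {u v : V} (hom : (∀ w ∈ W, G.Adj u w) ∨ (∀ w ∈ W, ¬ G.Adj u w))
      (hv : v ∈ W) : G.Adj u v ↔ ∀ w ∈ W, G.Adj u w :=
    hom.elim (fun h => iff_of_true (h v hv) h)
      (fun h => iff_of_false (h v hv) fun h' => h v hv (h' v hv))
  rw [isMPartition_Mhp_iff]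
  intro u v hu hv
  rw [← Set.mem_ofPred_eq (p := fun v => 2 ≤ (pairColouring G W₁ W₂ v).val),
    setOf_two_le_pairColouring] at hu
  obtain ⟨h₁, h₂⟩ : u ∉ W₁ ∧ u ∉ W₂ := by simpa using hu
  rw [pairColouring_of_not_mem G W₁ W₂ h₁ h₂]
  obtain hv' | hv' : pairColouring G W₁ W₂ v = 0 ∨ pairColouring G W₁ W₂ v = 1 := by omega
  · have hvW : v ∈ W₁ := setOf_pairColouring_eq_zero G W₁ W₂ ▸ hv'
    rw [hv', Mhp_uPart_zero, adj_iff (hom₁ u hu) hvW]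
  · have hvW : v ∈ W₂ := setOf_pairColouring_eq_one G W₁ W₂ hW ▸ hv'
    rw [hv', Mhp_uPart_one, adj_iff (hom₂ u hu) hvW]

theorem pairColouring_setOf_eq {σ : V → Fin 6}
    (hσ : IsMPartition G Mhp σ) (hne₀ : {v | σ v = 0}.Nonempty) (hne₁ : {v | σ v = 1}.Nonempty) :
    pairColouring G {v | σ v = 0} {v | σ v = 1} = σ := by
  funext v
  by_cases h₀ : σ v = 0
  · simp [pairColouring, h₀]
  by_cases h₁ : σ v = 1
  · simp [pairColouring, h₁]
  have hv : 2 ≤ (σ v).val := by omega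
  rw [pairColouring_of_not_mem G _ _ h₀ h₁,
    forall_adj_iff_of_isMPartition G hσ hv (by decide) hne₀,
    forall_adj_iff_of_isMPartition G hσ hv (by decide) hne₁, uPart_Mhp hv]

end pairColouring

theorem homogeneous_pairs_bijection_general {V : Type}
    (G : SimpleGraph V) :
    Nonempty (
      {t : Set V × Set V × Set V //
          t.1 ∪ t.2.1 ∪ t.2.2 = Set.univ ∧
          Disjoint t.1 t.2.1 ∧ Disjoint t.1 t.2.2 ∧ Disjoint t.2.1 t.2.2 ∧
          2 ≤ t.1.ncard ∧
          (2 ≤ t.2.1.ncard ∨ 2 ≤ t.2.2.ncard) ∧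
          (∀ v ∈ t.1, (∀ w ∈ t.2.1, G.Adj v w) ∨ (∀ w ∈ t.2.1, ¬ G.Adj v w)) ∧
          (∀ v ∈ t.1, (∀ w ∈ t.2.2, G.Adj v w) ∨ (∀ w ∈ t.2.2, ¬ G.Adj v w)) ∧
          t.2.1.Nonempty ∧ t.2.2.Nonempty}
      ≃
      {σ : V → Fin 6 //
          IsMPartition G Mhp σ ∧
          2 ≤ {v : V | 2 ≤ (σ v).val}.ncard ∧
          {v : V | σ v = 0}.Nonempty ∧ {v : V | σ v = 1}.Nonempty ∧
          (2 ≤ {v : V | σ v = 0}.ncard ∨ 2 ≤ {v : V | σ v = 1}.ncard)}) := by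
  refine ⟨{ toFun := fun t => ⟨pairColouring G t.1.2.1 t.1.2.2, ?_⟩
            invFun := fun σ => ⟨({v | 2 ≤ (σ.1 v).val}, {v | σ.1 v = 0}, {v | σ.1 v = 1}), ?_⟩
            left_inv := ?_
            right_inv := ?_ }⟩
  · obtain ⟨⟨U, W₁, W₂⟩, hcover, hd₁, hd₂, hW, hU, hcard, hom₁, hom₂, hne₁, hne₂⟩ := t
    obtain rfl : U = (W₁ ∪ W₂)ᶜ := Set.eq_compl_union_iff.2 ⟨hcover, hd₁, hd₂⟩
    rw [setOf_two_le_pairColouring, setOf_pairColouring_eq_zero,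
      setOf_pairColouring_eq_one G W₁ W₂ hW]
    exact ⟨isMPartition_pairColouring G W₁ W₂ hW hom₁ hom₂, hU, hne₁, hne₂, hcard⟩
  · obtain ⟨σ, hσ, hU, hne₀, hne₁, hcard⟩ := σ
    obtain ⟨hcover, hd₀, hd₁⟩ := Set.eq_compl_union_iff.1 (setOf_two_le_eq_compl σ)
    exact ⟨hcover, hd₀, hd₁, (Set.disjoint_singleton.2 (by decide)).preimage σ, hU, hcard,
      homogeneous_of_isMPartition G hσ (by decide), homogeneous_of_isMPartition G hσ (by decide),
      hne₀, hne₁⟩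
  · rintro ⟨⟨U, W₁, W₂⟩, hcover, hd₁, hd₂, hW, -⟩
    have hU : U = (W₁ ∪ W₂)ᶜ := Set.eq_compl_union_iff.2 ⟨hcover, hd₁, hd₂⟩
    simp only [setOf_two_le_pairColouring, setOf_pairColouring_eq_zero,
      setOf_pairColouring_eq_one G W₁ W₂ hW, hU]
  · rintro ⟨σ, hσ, -, hne₀, hne₁, -⟩
    exact Subtype.ext (pairColouring_setOf_eq G hσ hne₀ hne₁)

theorem homogeneous_pairs_bijection {V : Type} [Fintype V] [DecidableEq V]
    (G : SimpleGraph V) :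
    Nonempty (
      {t : Set V × Set V × Set V //
          t.1 ∪ t.2.1 ∪ t.2.2 = Set.univ ∧
          Disjoint t.1 t.2.1 ∧ Disjoint t.1 t.2.2 ∧ Disjoint t.2.1 t.2.2 ∧
          2 ≤ t.1.ncard ∧
          (2 ≤ t.2.1.ncard ∨ 2 ≤ t.2.2.ncard) ∧
          (∀ v ∈ t.1, (∀ w ∈ t.2.1, G.Adj v w) ∨ (∀ w ∈ t.2.1, ¬ G.Adj v w)) ∧
          (∀ v ∈ t.1, (∀ w ∈ t.2.2, G.Adj v w) ∨ (∀ w ∈ t.2.2, ¬ G.Adj v w)) ∧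
          t.2.1.Nonempty ∧ t.2.2.Nonempty}
      ≃
      {σ : V → Fin 6 //
          IsMPartition G Mhp σ ∧
          2 ≤ {v : V | 2 ≤ (σ v).val}.ncard ∧
          {v : V | σ v = 0}.Nonempty ∧ {v : V | σ v = 1}.Nonempty ∧
          (2 ≤ {v : V | σ v = 0}.ncard ∨ 2 ≤ {v : V | σ v = 1}.ncard)}) :=
  homogeneous_pairs_bijection_general G
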